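/- arXiv:1604.07075 — 3 statements merged into one kernel-verified Lean document; each statement's English description precedes it below -/
import Mathlib

section
/- Let R be an ordered commutative ring and (G,L) an R-network on a connected ∂-graph G with w(e) > 0 for all edges e and d(x) ≥ 0 for all vertices x, where G has infinitely many vertices. If u : V → R is a finitely supported function with Lu ≡ 0 on all of V, then u = 0. -/
/-!
Strong maximum principle. A finitely supported function on an infinite vertex set vanishes
somewhere, so its maximum `M` is attained and `M ≥ 0`. At a vertex where `u = M`, the
equation `Lu = 0` writes `0` as `d u + ∑ w (M - u(neighbour))`, a sum of nonnegative terms;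
since `w > 0` every neighbour also takes the value `M`. By connectivity `u ≡ M`, and `u`
vanishes somewhere, so `u = 0`.
-/

open Finsupp

/-- A graph with boundary (`∂`-graph) together with a generalized Laplacian datum over `R`:
oriented edges with a fixed-point-free reversal involution, local finiteness,
a set of boundary vertices, symmetric edge weights `w` and diagonal perturbation `d`. -/
structure DNetwork (R : Type) [CommRing R] where
  V : Type
  E : Type
  src : E → V
  rev : E → E
  rev_rev : ∀ e, rev (rev e) = e
  rev_ne : ∀ e, rev e ≠ e
  finE : ∀ x : V, Fintype {e : E // src e = x}
  boundary : Set V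
  w : E → R
  w_rev : ∀ e, w (rev e) = w e
  d : V → R

namespace DNetwork

variable {R : Type} [CommRing R] (N : DNetwork R)

/-- The endpoint of an oriented edge. -/
def tgt (e : N.E) : N.V := N.src (N.rev e)

/-- The generalized Laplacian evaluated at the vertex `x`, as a linear functional on
`M`-valued functions: `Lu(x) = d(x) u(x) + ∑_{e : e₊ = x} w(e) (u(x) - u(e₋))`. -/
noncomputable def lapAt {M : Type} [AddCommGroup M] [Module R M] (x : N.V) :
    (N.V → M) →ₗ[R] M :=
  letI := N.finE x
  N.d x • (LinearMap.proj x : (N.V → M) →ₗ[R] M) +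
    ∑ e : {e : N.E // N.src e = x},
      N.w e.1 • ((LinearMap.proj x : (N.V → M) →ₗ[R] M) - LinearMap.proj (N.tgt e.1))

/-- The generalized Laplacian applied to the basis chain at the vertex `x`. -/
noncomputable def lapSingle (x : N.V) : N.V →₀ R :=
  letI := N.finE x
  N.d x • Finsupp.single x 1 +
    ∑ e : {e : N.E // N.src e = x},
      N.w e.1 • (Finsupp.single x 1 - Finsupp.single (N.tgt e.1) 1)

/-- The generalized Laplacian as a linear endomorphism of the module `RV` of `0`-chains. -/
noncomputable def chainLap : (N.V →₀ R) →ₗ[R] (N.V →₀ R) :=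
  Finsupp.lsum R fun x => LinearMap.toSpanSingleton R _ (N.lapSingle x)

/-- The set of interior vertices. -/
def interior : Set N.V := N.boundaryᶜ

/-- The submodule `L(RV°)` of `RV`. -/
noncomputable def lapImage : Submodule R (N.V →₀ R) :=
  Submodule.map N.chainLap (Finsupp.supported R R N.interior)

/-- The fundamental module `Υ(G,L) = RV / L(RV°)`. -/
abbrev Upsilon := (N.V →₀ R) ⧸ N.lapImage

/-- The submodule of `M`-valued harmonic functions `U(G,L,M)`. -/
noncomputable def harmonic (M : Type) [AddCommGroup M] [Module R M] :
    Submodule R (N.V → M) :=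
  ⨅ x ∈ N.interior, LinearMap.ker (N.lapAt (M := M) x)

/-- The module `U₀(G,L,M)` of finitely supported `M`-valued functions `u` with
`u = 0` on the boundary and `Lu ≡ 0` everywhere. -/
noncomputable def U0 (M : Type) [AddCommGroup M] [Module R M] :
    Submodule R (N.V →₀ M) :=
  (⨅ x ∈ N.boundary, LinearMap.ker (Finsupp.lapply (M := M) (R := R) x)) ⊓
    (⨅ x : N.V, LinearMap.ker ((N.lapAt (M := M) x).comp Finsupp.lcoeFun))

/-- Adjacency via an oriented edge. -/
def Adj (x y : N.V) : Prop := ∃ e : N.E, N.src e = x ∧ N.tgt e = y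

/-- Connectivity of the underlying graph. -/
def Connected : Prop := ∀ x y : N.V, Relation.ReflTransGen N.Adj x y

end DNetwork

namespace DNetwork

variable {R : Type}

theorem lapAt_apply [CommRing R] (N : DNetwork R) {M : Type} [AddCommGroup M] [Module R M]
    (x : N.V) (u : N.V → M) :
    N.lapAt x u = N.d x • u x +
      letI := N.finE x
      ∑ e : {e : N.E // N.src e = x}, N.w e.1 • (u x - u (N.tgt e.1)) := by
  simp [lapAt]

theorem Connected.forall_of_adj [CommRing R] {N : DNetwork R} (hconn : N.Connected)
    {P : N.V → Prop} {x : N.V} (hx : P x) (hadj : ∀ a b, N.Adj a b → P a → P b) (y : N.V) :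
    P y := by
  induction hconn x y with
  | refl => exact hx
  | tail _ hab ih => exact hadj _ _ hab ih

section Ordered

variable [CommRing R] [LinearOrder R] [IsStrictOrderedRing R] (N : DNetwork R)

theorem apply_tgt_eq_of_forall_le (hw : ∀ e : N.E, 0 < N.w e) (hd : ∀ x : N.V, 0 ≤ N.d x)
    {u : N.V → R} {b : N.V} (hlap : N.lapAt b u = 0) (hb : 0 ≤ u b) (hmax : ∀ y, u y ≤ u b)
    {e : N.E} (he : N.src e = b) :
    u (N.tgt e) = u b := by
  let _ := N.finE b
  have hterm : ∀ f ∈ (Finset.univ : Finset {e : N.E // N.src e = b}),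
      0 ≤ N.w f.1 • (u b - u (N.tgt f.1)) :=
    fun f _ => smul_nonneg (hw f.1).le (sub_nonneg.mpr (hmax _))
  rw [lapAt_apply] at hlap
  have hsum := ((add_eq_zero_iff_of_nonneg (smul_nonneg (hd b) hb)
    (Finset.sum_nonneg hterm)).mp hlap).2
  have hedge := (Finset.sum_eq_zero_iff_of_nonneg hterm).mp hsum ⟨e, he⟩ (Finset.mem_univ _)
  rw [smul_eq_mul, mul_eq_zero, sub_eq_zero] at hedge
  exact (hedge.resolve_left (hw e).ne').symm

theorem eq_of_forall_le_of_lapAt_eq_zero (hconn : N.Connected) (hw : ∀ e : N.E, 0 < N.w e)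
    (hd : ∀ x : N.V, 0 ≤ N.d x) {u : N.V → R} (hlap : ∀ x, N.lapAt x u = 0) {b : N.V}
    (hb : 0 ≤ u b) (hmax : ∀ y, u y ≤ u b) (y : N.V) :
    u y = u b :=
  hconn.forall_of_adj (P := fun a => u a = u b) rfl
    (fun a _ ⟨_, he, hte⟩ ha => hte ▸ ha ▸
      N.apply_tgt_eq_of_forall_le hw hd (hlap a) (ha ▸ hb) (ha ▸ hmax) he) y

end Ordered

end DNetwork

theorem Finsupp.exists_forall_apply_le {α M : Type*} [Nonempty α] [Zero M] [LinearOrder M]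
    (u : α →₀ M) : ∃ x, ∀ y, u y ≤ u x := by
  obtain ⟨_, ⟨x, rfl⟩, hx⟩ :=
    Set.exists_max_image (Set.range u) id u.finite_range (Set.range_nonempty u)
  exact ⟨x, fun y => hx _ ⟨y, rfl⟩⟩

/-- over an ordered commutative ring, with positive edge weights, nonnegative
diagonal, connected graph with infinitely many vertices, a finitely supported function
with `Lu ≡ 0` on all of `V` vanishes identically. -/
theorem finsupp_lap_zero_eq_zero_of_infinite
    {R : Type} [CommRing R] [LinearOrder R] [IsStrictOrderedRing R] (N : DNetwork R)
    (hw : ∀ e : N.E, 0 < N.w e) (hd : ∀ x : N.V, 0 ≤ N.d x)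
    (hconn : N.Connected) [Infinite N.V]
    (u : N.V →₀ R)
    (hlap : ∀ x : N.V, N.lapAt x ⇑u = 0) :
    u = 0 := by
  obtain ⟨z, hz⟩ := Infinite.exists_notMem_finset u.support
  have huz : u z = 0 := Finsupp.notMem_support_iff.mp hz
  obtain ⟨b, hmax⟩ := u.exists_forall_apply_le
  have hconst := N.eq_of_forall_le_of_lapAt_eq_zero hconn hw hd hlap (huz ▸ hmax z) hmax
  ext y
  rw [hconst y, ← hconst z, huz, Finsupp.coe_zero, Pi.zero_apply]
end

section
/- Let (G,L) be an R-network and suppose (G',L') is obtained from (G,L) by adjoining a boundary spike e with unit weight w(e) ∈ R^× (i.e., adding a new boundary vertex e₊ joined by a single edge e to a vertex e₋ of G that becomes interior in G'). Then the inclusion induces an isomorphism Υ(G,L) ≅ Υ(G',L'). -/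
open Finsupp

private theorem finite_subtype_sum_elim {α β γ : Type} (f : α → γ) (g : β → γ) (x : γ)
    (h1 : Finite {a : α // f a = x}) (h2 : Finite {b : β // g b = x}) :
    Finite {c : α ⊕ β // Sum.elim f g c = x} := by
  haveI : Finite {a : α // Sum.elim f g (Sum.inl a) = x} :=
    Finite.of_equiv {a : α // f a = x}
      (Equiv.subtypeEquivRight (q := fun a => Sum.elim f g (Sum.inl a) = x)
        (fun a => by simp))
  haveI : Finite {b : β // Sum.elim f g (Sum.inr b) = x} :=
    Finite.of_equiv {b : β // g b = x}
      (Equiv.subtypeEquivRight (q := fun b => Sum.elim f g (Sum.inr b) = x)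
        (fun b => by simp))
  exact Finite.of_equiv _ (Equiv.subtypeSum (p := fun c => Sum.elim f g c = x)).symm

/-- The network obtained from `N` by adjoining a boundary spike at the vertex `y` (which is a
boundary vertex of `N` and becomes interior): a new boundary vertex `none` is joined to
`some y` by a single new edge of weight `ω`, and the diagonal entry at the new vertex is `δ`.
All old weights and diagonal entries are kept. -/
noncomputable def DNetwork.addSpike {R : Type} [CommRing R] (N : DNetwork R)
    (y : N.V) (ω δ : R) : DNetwork R where
  V := Option N.V
  E := N.E ⊕ Bool
  src := Sum.elim (fun e => some (N.src e)) (fun b => if b then none else some y)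
  rev := Sum.elim (fun e => Sum.inl (N.rev e)) (fun b => Sum.inr (!b))
  rev_rev := by rintro (e | b) <;> simp [N.rev_rev]
  rev_ne := by
    rintro (e | b)
    · simpa using N.rev_ne e
    · simp
  finE := fun x => by
    classical
    haveI h1 : Finite {a : N.E // (some (N.src a) : Option N.V) = x} := by
      cases x with
      | none =>
        haveI : IsEmpty {a : N.E // (some (N.src a) : Option N.V) = none} :=
          ⟨fun e => by simpa using e.2⟩
        infer_instance
      | some v =>
        haveI := N.finE v
        refine Finite.of_injective
          (fun a => (⟨a.1, by simpa using a.2⟩ : {e : N.E // N.src e = v})) ?_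
        intro a b h
        apply Subtype.ext
        have := congrArg Subtype.val h
        simpa using this
    haveI h2 : Finite {b : Bool // (if b then none else some y : Option N.V) = x} :=
      Finite.of_injective (fun b => b.1) Subtype.val_injective
    haveI := finite_subtype_sum_elim (fun e : N.E => (some (N.src e) : Option N.V))
      (fun b : Bool => (if b then none else some y : Option N.V)) x h1 h2
    exact Fintype.ofFinite _
  boundary := insert none (some '' (N.boundary \ {y}))
  w := Sum.elim N.w fun _ => ω
  w_rev := by rintro (e | b) <;> simp [N.w_rev]
  d := fun x => x.elim δ N.d

/-!
The inclusion `V ↪ V'` maps `L(RV°)` into `L'(RV'°)`, since `L'(e_x) = L(e_x)` for every interior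
`x ≠ y` of `G`. It is onto modulo `L'(RV'°)` because the one new relation
`L'(e_y) = L(e_y) + ω (e_y - e₊)` expresses `e₊` through old vertices when `ω` is a unit. It is
injective modulo the relations because the retraction `RV' → RV` fixing old vertices and sending
`e₊ ↦ e_y + ω⁻¹ L(e_y)` kills that new relation and returns every other one to `L(RV°)`.
-/
namespace Submodule

variable {R M M' : Type} [Ring R] [AddCommGroup M] [Module R M] [AddCommGroup M'] [Module R M']

theorem bijective_mapQ_of_leftInverse {p : Submodule R M} {q : Submodule R M'}
    (f : M →ₗ[R] M') (g : M' →ₗ[R] M) (hgf : g ∘ₗ f = LinearMap.id)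
    (hf : p ≤ q.comap f) (hg : q ≤ p.comap g) (hspan : q ⊔ LinearMap.range f = ⊤) :
    Function.Bijective (p.mapQ q f hf) := by
  have hcomap : q.comap f ≤ p := fun m hm => by
    simpa [← LinearMap.comp_apply, hgf] using hg hm
  constructor
  · rw [← LinearMap.ker_eq_bot, ker_mapQ, eq_bot_iff, ← mkQ_map_self p]
    exact map_mono hcomap
  · rw [← LinearMap.range_eq_top, range_mapQ, map_mkQ_eq_top]
    exact hspan

end Submodule

namespace DNetwork

variable {R : Type} [CommRing R] (N : DNetwork R)

theorem chainLap_single (x : N.V) : N.chainLap (Finsupp.single x 1) = N.lapSingle x := by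
  simp [chainLap]

theorem lapImage_eq_span : N.lapImage = Submodule.span R (N.lapSingle '' N.interior) := by
  rw [lapImage, supported_eq_span_single, Submodule.map_span, ← Set.image_comp]
  exact congrArg _ (Set.image_congr fun x _ => N.chainLap_single x)

theorem lapSingle_mem_lapImage {x : N.V} (hx : x ∈ N.interior) : N.lapSingle x ∈ N.lapImage := by
  rw [lapImage_eq_span]
  exact Submodule.subset_span ⟨x, hx, rfl⟩

variable (y : N.V) (ω δ : R)

theorem some_mem_addSpike_interior {v : N.V} :
    some v ∈ (N.addSpike y ω δ).interior ↔ v ∈ N.interior ∨ v = y := by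
  show some v ∉ insert none (some '' (N.boundary \ {y})) ↔ _
  simp [interior, or_iff_not_imp_left]

theorem none_notMem_addSpike_interior : none ∉ (N.addSpike y ω δ).interior := by
  show ¬none ∉ insert none (some '' (N.boundary \ {y}))
  simp

theorem lapSingle_eq_sum_of_equiv {ι : Type} [Fintype ι] (x : N.V)
    (σ : ι ≃ {e : N.E // N.src e = x}) :
    N.lapSingle x = N.d x • single x 1 +
      ∑ i, N.w (σ i) • (single x 1 - single (N.tgt (σ i)) 1) := by
  let _ := N.finE x
  exact congrArg _ (Fintype.sum_equiv σ _ _ fun _ => rfl).symm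

theorem addSpike_lapSingle_some (v : N.V) [DecidableEq N.V] :
    (N.addSpike y ω δ).lapSingle (some v) = (mapDomain some (N.lapSingle v) +
      if v = y then ω • (single (some y) 1 - single none 1) else 0 : Option N.V →₀ R) := by
  classical
  let _ := N.finE v
  let σ : {a : N.E // N.src a = v} ⊕ {b : Bool // (if b then none else some y) = some v} ≃
      {c : (N.addSpike y ω δ).E // (N.addSpike y ω δ).src c = some v} :=
    (Equiv.sumCongr (Equiv.subtypeEquivRight fun _ => Option.some_inj.symm) (Equiv.refl _)).trans
      (Equiv.subtypeSum (p := fun c => (N.addSpike y ω δ).src c = some v)).symm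
  rw [lapSingle_eq_sum_of_equiv _ _ σ, Fintype.sum_sum_type, ← add_assoc]
  congr 1
  · show N.d v • single (some v) (1 : R) + ∑ a : {a // N.src a = v},
      N.w a • (single (some v) 1 - single (some (N.tgt a)) 1) = _
    rw [N.lapSingle_eq_sum_of_equiv v (Equiv.refl _)]
    simp only [mapDomain_add, mapDomain_smul, mapDomain_finsetSum, mapDomain_sub,
      mapDomain_single, Equiv.refl_apply]
    rfl
  · split_ifs with hvy
    · subst hvy
      rw [Fintype.sum_eq_single ⟨false, rfl⟩]
      · rfl
      · rintro ⟨_ | _, hb⟩ hne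
        · exact absurd rfl hne
        · simp at hb
    · refine Fintype.sum_eq_zero _ fun ⟨b, hb⟩ => ?_
      cases b
      · exact absurd (Option.some_injective _ hb).symm hvy
      · simp at hb

theorem lapImage_le_comap_addSpike (hy : y ∈ N.boundary) :
    N.lapImage ≤ (N.addSpike y ω δ).lapImage.comap (lmapDomain R R some) := by
  classical
  rw [lapImage_eq_span, Submodule.span_le]
  rintro _ ⟨x, hx, rfl⟩
  have hxy : x ≠ y := fun h => hx (h ▸ hy)
  have hx' := lapSingle_mem_lapImage _ ((N.some_mem_addSpike_interior y ω δ).2 (Or.inl hx))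
  rwa [addSpike_lapSingle_some, if_neg hxy, add_zero] at hx'

/-- The new vertex goes to `e_y + ω⁻¹ L(e_y)`, which is what the relation
`L'(e_y) = L(e_y) + ω (e_y - e₊)` forces modulo `L'(RV'°)`. -/
noncomputable def spikeRetraction (u : Rˣ) : (Option N.V →₀ R) →ₗ[R] (N.V →₀ R) :=
  linearCombination R fun o => o.elim (single y 1 + (↑u⁻¹ : R) • N.lapSingle y) (single · 1)

theorem spikeRetraction_comp_lmapDomain (u : Rˣ) :
    N.spikeRetraction y u ∘ₗ lmapDomain R R some = LinearMap.id := by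
  ext v
  simp [spikeRetraction]

theorem spikeRetraction_mapDomain (u : Rˣ) (c : N.V →₀ R) :
    N.spikeRetraction y u (mapDomain some c) = c :=
  LinearMap.congr_fun (N.spikeRetraction_comp_lmapDomain y u) c

theorem spikeRetraction_single_some (u : Rˣ) (v : N.V) :
    N.spikeRetraction y u (single (some v) 1) = single v 1 := by
  simp [spikeRetraction]

theorem spikeRetraction_single_none (u : Rˣ) :
    N.spikeRetraction y u (single none 1) = single y 1 + (↑u⁻¹ : R) • N.lapSingle y := by
  simp [spikeRetraction]

theorem lapImage_addSpike_le_comap (u : Rˣ) :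
    (N.addSpike y u δ).lapImage ≤ N.lapImage.comap (N.spikeRetraction y u) := by
  classical
  rw [lapImage_eq_span]
  refine Submodule.span_le.2 ?_
  rintro _ ⟨_ | x, hx, rfl⟩
  · exact absurd hx (N.none_notMem_addSpike_interior y u δ)
  change N.spikeRetraction y u ((N.addSpike y u δ).lapSingle (some x) : Option N.V →₀ R) ∈
    N.lapImage
  rw [addSpike_lapSingle_some]
  split_ifs with hxy
  · subst hxy
    rw [map_add, spikeRetraction_mapDomain, map_smul, map_sub, spikeRetraction_single_some,
      spikeRetraction_single_none, sub_add_cancel_left, smul_neg, smul_smul, Units.mul_inv,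
      one_smul, add_neg_cancel]
    exact zero_mem _
  · rw [add_zero, spikeRetraction_mapDomain]
    exact N.lapSingle_mem_lapImage (((N.some_mem_addSpike_interior y u δ).1 hx).resolve_right hxy)

theorem lapImage_addSpike_sup_range_mapDomain (u : Rˣ) :
    (N.addSpike y u δ).lapImage ⊔ LinearMap.range (lmapDomain R R some) = ⊤ := by
  classical
  rw [eq_top_iff, ← supported_univ, supported_eq_span_single, Submodule.span_le]
  rintro _ ⟨_ | v, -, rfl⟩
  · have hy := lapSingle_mem_lapImage _ ((N.some_mem_addSpike_interior y u δ).2 (Or.inr rfl))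
    rw [addSpike_lapSingle_some, if_pos rfl] at hy
    have hnone : single none 1 =
        mapDomain some (single y 1 + (↑u⁻¹ : R) • N.lapSingle y) - (↑u⁻¹ : R) •
          (mapDomain some (N.lapSingle y) + (u : R) • (single (some y) 1 - single none 1)) := by
      rw [mapDomain_add, mapDomain_smul, mapDomain_single, smul_add, smul_smul, Units.inv_mul,
        one_smul]
      abel
    exact (congrArg (· ∈ _) hnone).mpr <| sub_mem (Submodule.mem_sup_right ⟨_, rfl⟩)
      (Submodule.mem_sup_left (Submodule.smul_mem _ _ hy))
  · exact Submodule.mem_sup_right ⟨single v 1, mapDomain_single⟩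

end DNetwork

/-- adjoining a boundary spike with unit weight induces an isomorphism
`Υ(G,L) ≅ Υ(G',L')`, sending the class of a vertex to the class of its image. -/
theorem upsilon_iso_of_addSpike {R : Type} [CommRing R] (N : DNetwork R)
    (y : N.V) (hy : y ∈ N.boundary) (ω : R) (hω : IsUnit ω) (δ : R) :
    ∃ φ : N.Upsilon ≃ₗ[R] (N.addSpike y ω δ).Upsilon,
      ∀ v : N.V,
        φ (N.lapImage.mkQ (Finsupp.single v 1)) =
          (N.addSpike y ω δ).lapImage.mkQ (Finsupp.single (some v) 1) := by
  obtain ⟨u, rfl⟩ := hω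
  refine ⟨LinearEquiv.ofBijective _ (Submodule.bijective_mapQ_of_leftInverse _ _
    (N.spikeRetraction_comp_lmapDomain y u) (N.lapImage_le_comap_addSpike y u δ hy)
    (N.lapImage_addSpike_le_comap y δ u) (N.lapImage_addSpike_sup_range_mapDomain y δ u)),
    fun v => ?_⟩
  show Submodule.Quotient.mk (mapDomain some (single v 1)) = _
  rw [mapDomain_single]
  rfl
end

section
/- Suppose G is a finite graph without boundary and G_{S→∂} (the ∂-graph obtained from G by declaring the vertices in a subset S ⊆ V to be boundary vertices) is layerable. Then every eigenvalue of any symmetric real matrix of the form D − A_w (with D diagonal and A_w a weighted adjacency matrix of G with nonzero weights on exactly the edges of G) has multiplicity at most |S|. In particular every eigenvalue of the standard Laplacian and adjacency matrix of G has multiplicity at most |S|. -/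
/-- A finite graph with boundary, concretely: finite sets of vertex and (unoriented) edge
labels in `ℕ`, an endpoint assignment for edges, and a set of boundary vertices. -/
structure FG where
  V : Finset ℕ
  E : Finset ℕ
  ends : ℕ → ℕ × ℕ
  B : Finset ℕ

namespace FG

/-- The generalized Laplacian of a weighted graph `(G, w, d)` at a vertex `x`, as a linear
functional on `F`-valued functions:
`Lu(x) = d(x)·u(x) + ∑_{edges e incident to x} w(e)·(u(x) - u(other endpoint))`. -/
noncomputable def lapAt (F : Type) [Field F] (G : FG) (w d : ℕ → F) (x : ℕ) :
    (ℕ → F) →ₗ[F] F :=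
  d x • (LinearMap.proj x : (ℕ → F) →ₗ[F] F) +
    ∑ e ∈ G.E,
      ((if (G.ends e).1 = x then
          w e • ((LinearMap.proj x : (ℕ → F) →ₗ[F] F) - LinearMap.proj (G.ends e).2)
        else 0) +
        (if (G.ends e).2 = x then
          w e • ((LinearMap.proj x : (ℕ → F) →ₗ[F] F) - LinearMap.proj (G.ends e).1)
        else 0))

/-- A single layer-stripping operation: deletion of an isolated boundary vertex, deletion of
a boundary edge, or contraction of a boundary spike. -/
inductive Strip : FG → FG → Prop
  /-- delete an isolated boundary vertex `x` -/
  | isolated (G : FG) (x : ℕ) (hx : x ∈ G.B)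
      (hiso : ∀ e ∈ G.E, (G.ends e).1 ≠ x ∧ (G.ends e).2 ≠ x) :
      Strip G ⟨G.V.erase x, G.E, G.ends, G.B.erase x⟩
  /-- delete a boundary edge `e` (both endpoints are boundary vertices) -/
  | bedge (G : FG) (e : ℕ) (he : e ∈ G.E)
      (h1 : (G.ends e).1 ∈ G.B) (h2 : (G.ends e).2 ∈ G.B) :
      Strip G ⟨G.V, G.E.erase e, G.ends, G.B⟩
  /-- contract a boundary spike `e` with boundary endpoint `x` (incident to no other edge)
  and interior endpoint `y`; afterwards `y` becomes a boundary vertex -/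
  | spike (G : FG) (e x y : ℕ) (he : e ∈ G.E)
      (hends : G.ends e = (x, y) ∨ G.ends e = (y, x))
      (hx : x ∈ G.B) (hy : y ∈ G.V) (hyi : y ∉ G.B)
      (honly : ∀ e' ∈ G.E, e' ≠ e → (G.ends e').1 ≠ x ∧ (G.ends e').2 ≠ x) :
      Strip G ⟨G.V.erase x, G.E.erase e, G.ends, insert y (G.B.erase x)⟩

/-- A `∂`-graph is layerable if it can be reduced to the empty graph by a sequence of
layer-stripping operations. -/
def Layerable (G : FG) : Prop :=
  ∃ G' : FG, Relation.ReflTransGen Strip G G' ∧ G'.V = ∅ ∧ G'.E = ∅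

/-- Evaluation of the generalized Laplacian. -/
lemma lapAt_apply (G : FG) (w d : ℕ → ℝ) (x : ℕ) (u : ℕ → ℝ) :
    FG.lapAt ℝ G w d x u = d x * u x + ∑ e ∈ G.E,
      ((if (G.ends e).1 = x then w e * (u x - u (G.ends e).2) else 0) +
       (if (G.ends e).2 = x then w e * (u x - u (G.ends e).1) else 0)) := by
  simp [FG.lapAt, LinearMap.sum_apply, apply_ite (fun (f : (ℕ → ℝ) →ₗ[ℝ] ℝ) => f u),
    smul_eq_mul]

/-- If `u` vanishes at both endpoints of `e`, the edge term of the Laplacian at any vertex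
vanishes. -/
lemma term_eq_zero {H : FG} {w u : ℕ → ℝ} {z e : ℕ}
    (h1 : u (H.ends e).1 = 0) (h2 : u (H.ends e).2 = 0) :
    ((if (H.ends e).1 = z then w e * (u z - u (H.ends e).2) else 0) +
     (if (H.ends e).2 = z then w e * (u z - u (H.ends e).1) else 0)) = 0 := by
  rcases hp : H.ends e with ⟨a, b⟩
  rw [hp] at h1 h2
  simp only at h1 h2 ⊢
  split_ifs with c1 c2 c2 <;> simp_all

/-- The invariant maintained along layer stripping: `u` vanishes off the vertex set and on
the boundary, satisfies the eigen-equation at every vertex, the edge weights are nonzero,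
and the boundary is contained in the vertex set. -/
def Inv (w d : ℕ → ℝ) (lam : ℝ) (H : FG) (u : ℕ → ℝ) : Prop :=
  (∀ x, x ∉ H.V → u x = 0) ∧ (∀ x ∈ H.B, u x = 0) ∧
  (∀ x ∈ H.V, FG.lapAt ℝ H w d x u = lam * u x) ∧ (∀ e ∈ H.E, w e ≠ 0) ∧ H.B ⊆ H.V

/-- A single layer-stripping operation preserves the invariant. -/
lemma Inv.strip {w d : ℕ → ℝ} {lam : ℝ} {H H' : FG} (h : Strip H H') {u : ℕ → ℝ}
    (hI : Inv w d lam H u) : Inv w d lam H' u := by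
  obtain ⟨h0, hb, hl, hw, hBV⟩ := hI
  cases h with
  | isolated x hx hiso =>
      refine ⟨?_, ?_, ?_, hw, Finset.erase_subset_erase x hBV⟩
      · intro z hz
        by_cases hzx : z = x
        · exact hzx ▸ hb x hx
        · exact h0 z (fun hzV => hz (Finset.mem_erase.2 ⟨hzx, hzV⟩))
      · intro z hz; exact hb z (Finset.mem_of_mem_erase hz)
      · intro z hz
        have := hl z (Finset.mem_of_mem_erase hz)
        rw [lapAt_apply] at this ⊢
        exact this
  | bedge e he h1 h2 =>
      refine ⟨h0, hb, ?_, fun e' he' => hw e' (Finset.mem_of_mem_erase he'), hBV⟩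
      intro z hz
      have key := term_eq_zero (H := H) (w := w) (u := u) (z := z) (e := e) (hb _ h1) (hb _ h2)
      have heq := hl z hz
      rw [lapAt_apply] at heq
      rw [← Finset.add_sum_erase _ _ he, key, zero_add] at heq
      rw [lapAt_apply]
      exact heq
  | spike e x y he hends hx hy hyi honly =>
      have hux : u x = 0 := hb x hx
      have hxy : y ≠ x := fun h => hyi (h ▸ hx)
      have heq := hl x (hBV hx)
      rw [lapAt_apply] at heq
      have hsum : ∀ e' ∈ H.E,
          ((if (H.ends e').1 = x then w e' * (u x - u (H.ends e').2) else 0) +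
           (if (H.ends e').2 = x then w e' * (u x - u (H.ends e').1) else 0)) =
          (if e' = e then -(w e * u y) else 0) := by
        intro e' he'
        by_cases hee : e' = e
        · subst hee
          rcases hends with h | h <;> rw [h] <;> simp [hxy, hux, hxy.symm] <;> ring
        · have := honly e' he' hee
          simp [this.1, this.2, hee]
      have huy : u y = 0 := by
        rw [Finset.sum_congr rfl hsum, Finset.sum_ite_eq' H.E e (fun _ => -(w e * u y)),
          if_pos he, hux] at heq
        have hwe := hw e he
        have : w e * u y = 0 := by linarith
        rcases mul_eq_zero.1 this with h | h
        · exact absurd h hwe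
        · exact h
      have hends0 : u (H.ends e).1 = 0 ∧ u (H.ends e).2 = 0 := by
        rcases hends with h | h
        · rw [h]; exact ⟨hux, huy⟩
        · rw [h]; exact ⟨huy, hux⟩
      refine ⟨?_, ?_, ?_, fun e' he' => hw e' (Finset.mem_of_mem_erase he'), ?_⟩
      · intro z hz
        by_cases hzx : z = x
        · exact hzx ▸ hux
        · exact h0 z (fun hzV => hz (Finset.mem_erase.2 ⟨hzx, hzV⟩))
      · intro z hz
        rcases Finset.mem_insert.1 hz with h | h
        · exact h ▸ huy
        · exact hb z (Finset.mem_of_mem_erase h)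
      · intro z hz
        have hzV := Finset.mem_of_mem_erase hz
        have key := term_eq_zero (H := H) (w := w) (u := u) (z := z) (e := e)
          hends0.1 hends0.2
        have heqz := hl z hzV
        rw [lapAt_apply] at heqz
        rw [← Finset.add_sum_erase _ _ he, key, zero_add] at heqz
        rw [lapAt_apply]
        exact heqz
      · intro z hz
        rcases Finset.mem_insert.1 hz with h | h
        · exact Finset.mem_erase.2 ⟨h ▸ hxy, h ▸ hy⟩
        · exact Finset.erase_subset_erase x hBV h

end FG

/-- The `λ`-eigenspace of the operator `D - A_w` (realized as the generalized Laplacian with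
symmetric edge weights `w` and arbitrary diagonal `d`) of a finite graph without boundary,
inside the functions supported on the vertex set. -/
noncomputable def FG.eigSpace (G : FG) (w d : ℕ → ℝ) (lam : ℝ) : Submodule ℝ (ℕ → ℝ) :=
  (⨅ x ∈ {x : ℕ | x ∉ G.V}, LinearMap.ker (LinearMap.proj x : (ℕ → ℝ) →ₗ[ℝ] ℝ)) ⊓
    ⨅ x ∈ G.V, LinearMap.ker
      (FG.lapAt ℝ G w d x - lam • (LinearMap.proj x : (ℕ → ℝ) →ₗ[ℝ] ℝ))

/-- if `G` is a finite graph without boundary and `G_{S→∂}` is layerable, then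
every eigenvalue of any symmetric real matrix `D - A_w` (diagonal `D` arbitrary, `A_w` a
weighted adjacency matrix with nonzero weights exactly on the edges of `G`) has multiplicity
at most `|S|`. -/
theorem eigenvalue_multiplicity_le_of_layerable (G : FG)
    (hB : G.B = ∅)
    (hE : ∀ e ∈ G.E, (G.ends e).1 ∈ G.V ∧ (G.ends e).2 ∈ G.V)
    (S : Finset ℕ) (hS : S ⊆ G.V)
    (hlay : FG.Layerable ⟨G.V, G.E, G.ends, S⟩)
    (w d : ℕ → ℝ) (hw : ∀ e ∈ G.E, w e ≠ 0) (lam : ℝ) :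
    Module.finrank ℝ (FG.eigSpace G w d lam) ≤ S.card := by
  obtain ⟨G', hrtg, hV', -⟩ := hlay
  -- the restriction map to `S` is injective on the eigenspace
  set f : (FG.eigSpace G w d lam) →ₗ[ℝ] (↥S → ℝ) :=
    (LinearMap.funLeft ℝ ℝ (Subtype.val : ↥S → ℕ)).comp (Submodule.subtype _) with hf
  have hinj : Function.Injective f := by
    rw [← LinearMap.ker_eq_bot, LinearMap.ker_eq_bot']
    rintro ⟨u, hu⟩ h0f
    have hbS : ∀ x ∈ S, u x = 0 := by
      intro x hxS
      have := congrFun h0f ⟨x, hxS⟩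
      simpa [hf, LinearMap.funLeft] using this
    obtain ⟨hu1, hu2⟩ := hu
    have h0 : ∀ x, x ∉ G.V → u x = 0 := by
      intro x hx
      have := (Submodule.mem_iInf _).1 hu1 x
      have := (Submodule.mem_iInf _).1 this hx
      simpa using this
    have hl : ∀ x ∈ G.V, FG.lapAt ℝ G w d x u = lam * u x := by
      intro x hx
      have := (Submodule.mem_iInf _).1 hu2 x
      have := (Submodule.mem_iInf _).1 this hx
      rw [LinearMap.mem_ker, LinearMap.sub_apply, LinearMap.smul_apply,
        LinearMap.proj_apply, sub_eq_zero] at this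
      simpa using this
    have hInv0 : FG.Inv w d lam ⟨G.V, G.E, G.ends, S⟩ u := by
      refine ⟨h0, hbS, ?_, hw, hS⟩
      intro z hz
      rw [FG.lapAt_apply]
      have := hl z hz
      rw [FG.lapAt_apply] at this
      exact this
    have mono : ∀ {A B : FG}, Relation.ReflTransGen FG.Strip A B →
        FG.Inv w d lam A u → FG.Inv w d lam B u := by
      intro A B h
      induction h with
      | refl => exact id
      | tail _ step ih => exact fun hA => (ih hA).strip step
    have hInv' := mono hrtg hInv0
    have : u = 0 := by
      funext x
      exact hInv'.1 x (by simp [hV'])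
    simpa [Subtype.ext_iff] using this
  calc Module.finrank ℝ (FG.eigSpace G w d lam) ≤ Module.finrank ℝ (↥S → ℝ) :=
        LinearMap.finrank_le_finrank_of_injective hinj
    _ = S.card := by rw [Module.finrank_fintype_fun_eq_card, Fintype.card_coe]
end
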